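/- arXiv:2101.12682 — 2 statements merged into one kernel-verified Lean document; each statement's English description precedes it below -/
import Mathlib

section
/- Let X ⊆ Σ^{ℤ²} be a nonempty finite SFT, and let N₁ (respectively N₂) be a positive integer such that σ^{N₁e₁}(x) = x (respectively σ^{N₂e₂}(x) = x) for all x ∈ X. Let maj : Σ³ → Σ be any function that returns a symbol occurring at least twice among its three arguments whenever such a symbol exists. Then the cellular automaton F defined by F(x)_k := maj(x_k, x_{k+N₁e₁}, x_{k+N₂e₂}) stabilises X from finite perturbations in linear time; in fact, if Δ(x, y) ⊆ T_n := {k ∈ ℤ² : k₁ + k₂ ≤ n, k₁, k₂ ≥ 0} for some x ∈ X, then F^{n+1}(y) = x. -/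
/-- The set of cells where two configurations on `ℤ²` disagree. -/
def diffSet {A : Type} (x y : ℤ × ℤ → A) : Set (ℤ × ℤ) := {i | x i ≠ y i}

/-- Finite perturbations of elements of `X`. -/
def FPert {A : Type} (X : Set (ℤ × ℤ → A)) : Set (ℤ × ℤ → A) :=
  {y | ∃ x ∈ X, (diffSet x y).Finite}

/-- The diameter of a set `S ⊆ ℤ²`: the least `m` with `S ⊆ i + [0,m)²` for some `i`. -/
noncomputable def diam2 (S : Set (ℤ × ℤ)) : ℕ :=
  sInf {m : ℕ | ∃ i : ℤ × ℤ, ∀ a ∈ S,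
    i.1 ≤ a.1 ∧ a.1 < i.1 + (m : ℤ) ∧ i.2 ≤ a.2 ∧ a.2 < i.2 + (m : ℤ)}

/-- `δ(y, X)`: the least diameter of a finite difference set between `y` and an
element of `X`. -/
noncomputable def pdist2 {A : Type} (X : Set (ℤ × ℤ → A)) (y : ℤ × ℤ → A) : ℕ :=
  sInf {n : ℕ | ∃ x ∈ X, (diffSet x y).Finite ∧ diam2 (diffSet x y) = n}

/-- The triangle `T_n = {k ∈ ℤ² : k₁ + k₂ ≤ n, k₁, k₂ ≥ 0}`. -/
def Tri (n : ℕ) : Set (ℤ × ℤ) := {k | 0 ≤ k.1 ∧ 0 ≤ k.2 ∧ k.1 + k.2 ≤ (n : ℤ)}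

/-- `X` is a two-dimensional SFT: it is determined by a finite window `U` and a
set `P` of allowed patterns on `U`. -/
def IsSFT2 {A : Type} (X : Set (ℤ × ℤ → A)) : Prop :=
  ∃ (U : Finset (ℤ × ℤ)) (P : Set ({u // u ∈ U} → A)),
    X = {x | ∀ i : ℤ × ℤ, (fun u : {u // u ∈ U} => x (i + u.val)) ∈ P}

/-- Self-stabilisation of finite SFTs: if `X` is a nonempty finite SFT whose
configurations are all periodic with horizontal period `N₁` and vertical period
`N₂`, then the CA `F(x)_k = maj(x_k, x_{k+N₁e₁}, x_{k+N₂e₂})` fixes `X`,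
corrects any perturbation whose difference set lies in the triangle `T_n`
within `n+1` steps, and stabilises `X` from finite perturbations in linear
time. -/
theorem stmt4 {A : Type} [Fintype A] (X : Set (ℤ × ℤ → A))
    (hne : X.Nonempty) (hfin : X.Finite) (hsft : IsSFT2 X)
    (N₁ N₂ : ℕ) (hN₁ : 0 < N₁) (hN₂ : 0 < N₂)
    (hper₁ : ∀ x ∈ X, ∀ k : ℤ × ℤ, x (k + ((N₁ : ℤ), 0)) = x k)
    (hper₂ : ∀ x ∈ X, ∀ k : ℤ × ℤ, x (k + (0, (N₂ : ℤ))) = x k)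
    (maj : A → A → A → A)
    (hmaj : ∀ a b : A, maj a a b = a ∧ maj a b a = a ∧ maj b a a = a)
    (F : (ℤ × ℤ → A) → (ℤ × ℤ → A))
    (hF : ∀ x k, F x k = maj (x k) (x (k + ((N₁ : ℤ), 0))) (x (k + (0, (N₂ : ℤ))))) :
    (∀ x ∈ X, F x = x) ∧
    (∀ x ∈ X, ∀ y : ℤ × ℤ → A, ∀ n : ℕ, diffSet x y ⊆ Tri n → F^[n + 1] y = x) ∧
    (∃ c : ℕ, 0 < c ∧ ∀ y ∈ FPert X, ∃ t ≤ c * (pdist2 X y + 1), F^[t] y ∈ X) := by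

  have hfix : ∀ x ∈ X, F x = x := by
    intro x hx
    funext k
    rw [hF, hper₁ x hx k, hper₂ x hx k]
    exact (hmaj (x k) (x k)).1
  have hstep : ∀ x ∈ X, ∀ y : ℤ × ℤ → A, ∀ j : ℤ × ℤ, ∀ n : ℤ,
      (∀ k : ℤ × ℤ, x k ≠ y k → j.1 ≤ k.1 ∧ j.2 ≤ k.2 ∧ k.1 + k.2 ≤ j.1 + j.2 + n) →
      (∀ k : ℤ × ℤ, x k ≠ F y k → j.1 ≤ k.1 ∧ j.2 ≤ k.2 ∧ k.1 + k.2 ≤ j.1 + j.2 + n - 1) := by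
    intro x hx y j n h k hk
    have e1 : x (k + ((N₁ : ℤ), 0)) = x k := hper₁ x hx k
    have e2 : x (k + (0, (N₂ : ℤ))) = x k := hper₂ x hx k
    rw [hF] at hk
    have hN₁' : (1 : ℤ) ≤ (N₁ : ℤ) := by exact_mod_cast hN₁
    have hN₂' : (1 : ℤ) ≤ (N₂ : ℤ) := by exact_mod_cast hN₂
    by_cases d1 : x k = y k
    · by_cases d2 : x (k + ((N₁ : ℤ), 0)) = y (k + ((N₁ : ℤ), 0))
      · exfalso; apply hk
        rw [← d1, ← d2, e1]
        exact ((hmaj (x k) (y (k + (0, (N₂ : ℤ))))).1).symm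
      · by_cases d3 : x (k + (0, (N₂ : ℤ))) = y (k + (0, (N₂ : ℤ)))
        · exfalso; apply hk
          rw [← d1, ← d3, e2]
          exact ((hmaj (x k) (y (k + ((N₁ : ℤ), 0)))).2.1).symm
        · have h2 := h (k + ((N₁ : ℤ), 0)) d2
          have h3 := h (k + (0, (N₂ : ℤ))) d3
          simp only [Prod.fst_add, Prod.snd_add] at h2 h3
          obtain ⟨a1, a2, a3⟩ := h2
          obtain ⟨b1, b2, b3⟩ := h3
          refine ⟨by omega, by omega, by omega⟩
    · have h1 := h k d1
      obtain ⟨c1, c2, c3⟩ := h1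
      by_cases d2 : x (k + ((N₁ : ℤ), 0)) = y (k + ((N₁ : ℤ), 0))
      · by_cases d3 : x (k + (0, (N₂ : ℤ))) = y (k + (0, (N₂ : ℤ)))
        · exfalso; apply hk
          rw [← d2, ← d3, e1, e2]
          exact ((hmaj (x k) (y k)).2.2).symm
        · have h3 := h (k + (0, (N₂ : ℤ))) d3
          simp only [Prod.fst_add, Prod.snd_add] at h3
          obtain ⟨b1, b2, b3⟩ := h3
          refine ⟨c1, c2, by omega⟩
      · have h2 := h (k + ((N₁ : ℤ), 0)) d2
        simp only [Prod.fst_add, Prod.snd_add] at h2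
        obtain ⟨a1, a2, a3⟩ := h2
        refine ⟨c1, c2, by omega⟩
  have hiter : ∀ n : ℕ, ∀ x ∈ X, ∀ y : ℤ × ℤ → A, ∀ j : ℤ × ℤ,
      (∀ k : ℤ × ℤ, x k ≠ y k → j.1 ≤ k.1 ∧ j.2 ≤ k.2 ∧ k.1 + k.2 ≤ j.1 + j.2 + (n : ℤ)) →
      F^[n + 1] y = x := by
    intro n
    induction n with
    | zero =>
      intro x hx y j h
      have h' := hstep x hx y j 0 h
      have hFy : F y = x := by
        funext k
        by_contra hne'
        obtain ⟨a, b, c⟩ := h' k (fun he => hne' he.symm)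
        omega
      simpa using hFy
    | succ n ih =>
      intro x hx y j h
      have h' := hstep x hx y j ((n : ℤ) + 1) (by exact_mod_cast h)
      rw [Function.iterate_succ_apply]
      apply ih x hx (F y) j
      intro k hk
      obtain ⟨a, b, c⟩ := h' k hk
      exact ⟨a, b, by omega⟩
  have hbdd : ∀ S : Set (ℤ × ℤ), S.Finite → ∃ m : ℕ, ∃ i : ℤ × ℤ, ∀ a ∈ S,
      i.1 ≤ a.1 ∧ a.1 < i.1 + (m : ℤ) ∧ i.2 ≤ a.2 ∧ a.2 < i.2 + (m : ℤ) := by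
    intro S hS
    rcases S.eq_empty_or_nonempty with rfl | hSne
    · exact ⟨0, (0, 0), by simp⟩
    obtain ⟨b1, hb1⟩ := (hS.image Prod.fst).bddAbove
    obtain ⟨l1, hl1⟩ := (hS.image Prod.fst).bddBelow
    obtain ⟨b2, hb2⟩ := (hS.image Prod.snd).bddAbove
    obtain ⟨l2, hl2⟩ := (hS.image Prod.snd).bddBelow
    refine ⟨((b1 - l1 + 1) ⊔ (b2 - l2 + 1)).toNat, (l1, l2), ?_⟩
    intro a ha
    have h1 : a.1 ≤ b1 := hb1 (Set.mem_image_of_mem _ ha)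
    have h2 : l1 ≤ a.1 := hl1 (Set.mem_image_of_mem _ ha)
    have h3 : a.2 ≤ b2 := hb2 (Set.mem_image_of_mem _ ha)
    have h4 : l2 ≤ a.2 := hl2 (Set.mem_image_of_mem _ ha)
    have hm1 : b1 - l1 + 1 ≤ ((((b1 - l1 + 1) ⊔ (b2 - l2 + 1)).toNat : ℤ)) :=
      le_trans (le_max_left _ _) (Int.self_le_toNat _)
    have hm2 : b2 - l2 + 1 ≤ ((((b1 - l1 + 1) ⊔ (b2 - l2 + 1)).toNat : ℤ)) :=
      le_trans (le_max_right _ _) (Int.self_le_toNat _)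
    exact ⟨h2, by omega, h4, by omega⟩
  refine ⟨hfix, ?_, ?_⟩
  · intro x hx y n hsub
    apply hiter n x hx y (0, 0)
    intro k hk
    have hmem : k ∈ Tri n := hsub hk
    obtain ⟨a, b, c⟩ := hmem
    exact ⟨a, b, by simpa using c⟩
  · refine ⟨3, by norm_num, ?_⟩
    intro y hy
    obtain ⟨x, hx, hfinD⟩ := hy
    have hSne : {n : ℕ | ∃ x ∈ X, (diffSet x y).Finite ∧ diam2 (diffSet x y) = n}.Nonempty :=
      ⟨_, x, hx, hfinD, rfl⟩
    have hmem : pdist2 X y ∈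
        {n : ℕ | ∃ x ∈ X, (diffSet x y).Finite ∧ diam2 (diffSet x y) = n} :=
      Nat.sInf_mem hSne
    obtain ⟨x', hx', hfin', hdiam⟩ := hmem
    obtain ⟨m0, i0, hbox0⟩ := hbdd _ hfin'
    have hne2 : {m : ℕ | ∃ i : ℤ × ℤ, ∀ a ∈ diffSet x' y,
        i.1 ≤ a.1 ∧ a.1 < i.1 + (m : ℤ) ∧ i.2 ≤ a.2 ∧ a.2 < i.2 + (m : ℤ)}.Nonempty :=
      ⟨m0, i0, hbox0⟩
    have hmem2 : diam2 (diffSet x' y) ∈ {m : ℕ | ∃ i : ℤ × ℤ, ∀ a ∈ diffSet x' y,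
        i.1 ≤ a.1 ∧ a.1 < i.1 + (m : ℤ) ∧ i.2 ≤ a.2 ∧ a.2 < i.2 + (m : ℤ)} :=
      Nat.sInf_mem hne2
    obtain ⟨i, hbox⟩ := hmem2
    set m := pdist2 X y with hm
    rw [hdiam] at hbox
    refine ⟨2 * m + 1, by omega, ?_⟩
    have hres : F^[2 * m + 1] y = x' := by
      apply hiter (2 * m) x' hx' y i
      intro k hk
      obtain ⟨a, b, c, d⟩ := hbox k hk
      refine ⟨a, c, by push_cast; omega⟩
    rw [hres]; exact hx'
end

section
/- Let ℓ ≥ 2 and let X ⊆ Σ^{ℤ²} be a strongly ℓ-fillable tiling space. Then there exists a cellular automaton F : Σ^{ℤ²} → Σ^{ℤ²} (over the same alphabet Σ, with no extra symbols) that stabilises X from finite perturbations in quadratic time, i.e. there is a constant c such that every x̃ ∈ FPert(X) with δ(x̃,X) = n satisfies F^t(x̃) ∈ X for some t ≤ c·(n² + 1). -/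
/-!
Call a defect `d` of `y` an anchor if, for every cell `j` of the square `d + [0,ℓ)²`, `d` is the
lexicographically largest defect within distance `2ℓ` of `j`. Whether a cell lies in an anchor's
square can be read off a window of radius `3ℓ`; such cells take the value that the filling
operator gives to that square, all other cells keep their symbol. Squares of distinct anchors are
at distance at least `2`, so the fillings do not interfere: after one step the cells of anchor
squares are defect-free, and defect-free cells stay defect-free. The largest defect overall is
always an anchor, hence every step removes a defect. The defects of a perturbation of diameter
`n` lie in an `(n + 2)`-square, so `(n + 2)² ≤ 9 (n² + 1)` steps suffice.
-/


/-- The two standard basis vectors of `ℤ²`. -/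
def e1 : ℤ × ℤ := (1, 0)
def e2 : ℤ × ℤ := (0, 1)

/-- The tiling space (nearest-neighbour SFT) determined by `v₁, v₂`. -/
def tilingSpace {A : Type} (v₁ v₂ : A → A → Bool) : Set (ℤ × ℤ → A) :=
  {x | ∀ c : ℤ × ℤ, v₁ (x c) (x (c + e1)) = true ∧ v₂ (x c) (x (c + e2)) = true}

/-- A cell is defect-free: the nearest-neighbour constraints hold in all four
directions around it. -/
def DefectFree {A : Type} (v₁ v₂ : A → A → Bool) (x : ℤ × ℤ → A) (c : ℤ × ℤ) : Prop :=
  v₁ (x (c - e1)) (x c) = true ∧ v₁ (x c) (x (c + e1)) = true ∧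
  v₂ (x (c - e2)) (x c) = true ∧ v₂ (x c) (x (c + e2)) = true

/-- The standard `ℓ`-square `[0,ℓ)²` of cells. -/
def stdSq (l : ℕ) : Set (ℤ × ℤ) := {p | 0 ≤ p.1 ∧ p.1 < (l : ℤ) ∧ 0 ≤ p.2 ∧ p.2 < (l : ℤ)}

/-- Two cells of `ℤ²` are adjacent if their `ℓ¹` distance is `1`. -/
def Adjacent (p q : ℤ × ℤ) : Prop := |p.1 - q.1| + |p.2 - q.2| = 1

/-- The `4ℓ` cells bordering the standard `ℓ`-square. -/
def stdBorder (l : ℕ) : Set (ℤ × ℤ) :=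
  {p | p ∉ stdSq l ∧ ∃ q ∈ stdSq l, Adjacent p q}

/-- The tiling space determined by `v₁, v₂` is strongly `ℓ`-fillable: there is a
filling operator which, reading only the `4ℓ` symbols on the border of the
standard `ℓ`-square, rewrites the `ℓ²` cells of the square (leaving all other
cells unchanged) so that every cell of the square becomes defect-free,
whatever the border symbols are. -/
def StronglyFillable {A : Type} (l : ℕ) (v₁ v₂ : A → A → Bool) : Prop :=
  ∃ Ψ : (ℤ × ℤ → A) → (ℤ × ℤ → A),
    (∀ x y : ℤ × ℤ → A, (∀ b ∈ stdBorder l, x b = y b) →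
      ∀ p ∈ stdSq l, Ψ x p = Ψ y p) ∧
    (∀ (x : ℤ × ℤ → A) (p : ℤ × ℤ), p ∉ stdSq l → Ψ x p = x p) ∧
    (∀ (x : ℤ × ℤ → A), ∀ p ∈ stdSq l, DefectFree v₁ v₂ (Ψ x) p)

namespace TilingRepair

variable {A : Type}

section

variable {v₁ v₂ : A → A → Bool}

def InBox (r : ℕ) (v : ℤ × ℤ) : Prop :=
  -(r : ℤ) ≤ v.1 ∧ v.1 ≤ r ∧ -(r : ℤ) ≤ v.2 ∧ v.2 ≤ r

def defectSet (v₁ v₂ : A → A → Bool) (y : ℤ × ℤ → A) : Set (ℤ × ℤ) :=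
  {c | ¬ DefectFree v₁ v₂ y c}

lemma defectFree_congr {y y' : ℤ × ℤ → A} {c : ℤ × ℤ}
    (h : ∀ p, InBox 1 (p - c) → y p = y' p) :
    DefectFree v₁ v₂ y c ↔ DefectFree v₁ v₂ y' c := by
  have near : ∀ u : ℤ × ℤ, InBox 1 u → y (c + u) = y' (c + u) := fun u hu =>
    h _ (by rwa [add_sub_cancel_left])
  have h0 := near 0 (by simp [InBox])
  have h1 := near (-e1) (by simp [InBox, e1])
  have h2 := near e1 (by simp [InBox, e1])
  have h3 := near (-e2) (by simp [InBox, e2])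
  have h4 := near e2 (by simp [InBox, e2])
  simp only [← sub_eq_add_neg, add_zero] at h0 h1 h3
  simp only [DefectFree, h0, h1, h2, h3, h4]

lemma defectFree_translate (y : ℤ × ℤ → A) (v c : ℤ × ℤ) :
    DefectFree v₁ v₂ (fun p => y (v + p)) c ↔ DefectFree v₁ v₂ y (v + c) := by
  simp only [DefectFree, add_sub_assoc', add_assoc]

lemma mem_tilingSpace_iff {x : ℤ × ℤ → A} :
    x ∈ tilingSpace v₁ v₂ ↔ ∀ c, DefectFree v₁ v₂ x c := by
  refine ⟨fun hx c => ⟨?_, (hx c).1, ?_, (hx c).2⟩, fun h c => ⟨(h c).2.1, (h c).2.2.2⟩⟩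
  · simpa using (hx (c - e1)).1
  · simpa using (hx (c - e2)).2

lemma defectSet_eq_empty_iff {x : ℤ × ℤ → A} :
    defectSet v₁ v₂ x = ∅ ↔ x ∈ tilingSpace v₁ v₂ := by
  simp [Set.eq_empty_iff_forall_notMem, defectSet, mem_tilingSpace_iff]

lemma exists_mem_diffSet_of_mem_defectSet {x y : ℤ × ℤ → A} (hx : x ∈ tilingSpace v₁ v₂)
    {c : ℤ × ℤ} (hc : c ∈ defectSet v₁ v₂ y) : ∃ p ∈ diffSet x y, InBox 1 (p - c) := by
  by_contra! hagree
  refine hc ((defectFree_congr fun p hp => ?_).1 (mem_tilingSpace_iff.1 hx c))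
  by_contra hne
  exact hagree p hne hp

lemma mem_stdBorder_bounds {l : ℕ} {b : ℤ × ℤ} (hb : b ∈ stdBorder l) :
    -1 ≤ b.1 ∧ b.1 ≤ l ∧ -1 ≤ b.2 ∧ b.2 ≤ l := by
  obtain ⟨-, q, ⟨hq1, hq2, hq3, hq4⟩, hadj⟩ := hb
  have h1 := abs_le.1 (show |b.1 - q.1| ≤ 1 by linarith [abs_nonneg (b.2 - q.2), hadj.le])
  have h2 := abs_le.1 (show |b.2 - q.2| ≤ 1 by linarith [abs_nonneg (b.1 - q.1), hadj.le])
  omega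

lemma exists_diam2_eq_pdist2 {X : Set (ℤ × ℤ → A)} {y : ℤ × ℤ → A} (hy : y ∈ FPert X) :
    ∃ x ∈ X, (diffSet x y).Finite ∧ diam2 (diffSet x y) = pdist2 X y := by
  obtain ⟨x, hx, hfin⟩ := hy
  exact Nat.sInf_mem (s := {n | ∃ x ∈ X, (diffSet x y).Finite ∧ diam2 (diffSet x y) = n})
    ⟨_, x, hx, hfin, rfl⟩

lemma exists_square_of_finite {S : Set (ℤ × ℤ)} (hS : S.Finite) :
    ∃ i : ℤ × ℤ, ∀ a ∈ S,
      i.1 ≤ a.1 ∧ a.1 < i.1 + (diam2 S : ℤ) ∧ i.2 ≤ a.2 ∧ a.2 < i.2 + (diam2 S : ℤ) := by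
  obtain ⟨M, hM⟩ := hS.bddAbove
  obtain ⟨m, hm⟩ := hS.bddBelow
  refine Nat.sInf_mem (s := {k : ℕ | ∃ i : ℤ × ℤ, ∀ a ∈ S,
    i.1 ≤ a.1 ∧ a.1 < i.1 + (k : ℤ) ∧ i.2 ≤ a.2 ∧ a.2 < i.2 + (k : ℤ)})
    ⟨(M.1 - m.1 + M.2 - m.2 + 1).toNat, m, fun a ha => ?_⟩
  obtain ⟨h1, h2⟩ := Prod.le_def.1 (hM ha)
  obtain ⟨h3, h4⟩ := Prod.le_def.1 (hm ha)
  omega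

lemma defectSet_finite_and_ncard_le {x y : ℤ × ℤ → A} (hx : x ∈ tilingSpace v₁ v₂)
    {i : ℤ × ℤ} {n : ℕ}
    (hi : ∀ a ∈ diffSet x y, i.1 ≤ a.1 ∧ a.1 < i.1 + n ∧ i.2 ≤ a.2 ∧ a.2 < i.2 + n) :
    (defectSet v₁ v₂ y).Finite ∧ (defectSet v₁ v₂ y).ncard ≤ (n + 2) ^ 2 := by
  set B : Finset (ℤ × ℤ) := Finset.Icc (i.1 - 1) (i.1 + n) ×ˢ Finset.Icc (i.2 - 1) (i.2 + n)
  have hsub : defectSet v₁ v₂ y ⊆ B := fun c hc => by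
    obtain ⟨p, hp, hpc⟩ := exists_mem_diffSet_of_mem_defectSet hx hc
    have := hi p hp
    simp only [InBox, Prod.fst_sub, Prod.snd_sub] at hpc
    simp only [B, Finset.coe_product, Set.mem_prod, Finset.coe_Icc, Set.mem_Icc]
    omega
  have hcard : B.card = (n + 2) ^ 2 := by
    rw [Finset.card_product, Int.card_Icc, Int.card_Icc,
      show (i.1 + n + 1 - (i.1 - 1)).toNat = n + 2 by omega,
      show (i.2 + n + 1 - (i.2 - 1)).toNat = n + 2 by omega, sq]
  refine ⟨B.finite_toSet.subset hsub, ?_⟩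
  calc (defectSet v₁ v₂ y).ncard ≤ (B : Set (ℤ × ℤ)).ncard := Set.ncard_le_ncard hsub
    _ = (n + 2) ^ 2 := by rw [Set.ncard_coe_finset, hcard]

lemma exists_localRule {F : (ℤ × ℤ → A) → ℤ × ℤ → A} {N : Finset (ℤ × ℤ)} (hN : N.Nonempty)
    (htrans : ∀ x v i, F (fun p => x (v + p)) i = F x (v + i))
    (hloc : ∀ x x', (∀ p ∈ N, x p = x' p) → F x 0 = F x' 0) :
    ∃ f : ({n // n ∈ N} → A) → A, ∀ x i, F x i = f (fun n => x (i + n.val)) := by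
  classical
  let extend (u : {n // n ∈ N} → A) (p : ℤ × ℤ) : A :=
    if hp : p ∈ N then u ⟨p, hp⟩ else u ⟨hN.choose, hN.choose_spec⟩
  refine ⟨fun u => F (extend u) 0, fun x i => ?_⟩
  calc F x i = F (fun p => x (i + p)) 0 := by rw [htrans, add_zero]
    _ = F (extend fun n => x (i + n.val)) 0 := hloc _ _ fun p hp => by simp [extend, hp]

end

section Repair

variable (l : ℕ) (v₁ v₂ : A → A → Bool) (Ψ : (ℤ × ℤ → A) → (ℤ × ℤ → A))

def ReadsBorder : Prop :=
  ∀ x y : ℤ × ℤ → A, (∀ b ∈ stdBorder l, x b = y b) → ∀ p ∈ stdSq l, Ψ x p = Ψ y p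

def FixesOutside : Prop := ∀ (x : ℤ × ℤ → A) (p : ℤ × ℤ), p ∉ stdSq l → Ψ x p = x p

def FillsSquare : Prop := ∀ (x : ℤ × ℤ → A), ∀ p ∈ stdSq l, DefectFree v₁ v₂ (Ψ x) p

def IsMaxDefectNear (y : ℤ × ℤ → A) (j d : ℤ × ℤ) : Prop :=
  InBox (2 * l) (d - j) ∧ ¬ DefectFree v₁ v₂ y d ∧
    ∀ d', InBox (2 * l) (d' - j) → ¬ DefectFree v₁ v₂ y d' → toLex d' ≤ toLex d

def IsAnchor (y : ℤ × ℤ → A) (d : ℤ × ℤ) : Prop :=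
  ∀ j, j - d ∈ stdSq l → IsMaxDefectNear l v₁ v₂ y j d

def fillAt (y : ℤ × ℤ → A) (d : ℤ × ℤ) : ℤ × ℤ → A :=
  fun i => Ψ (fun q => y (d + q)) (i - d)

open Classical in
noncomputable def repair (y : ℤ × ℤ → A) (i : ℤ × ℤ) : A :=
  if h : ∃ d, IsAnchor l v₁ v₂ y d ∧ i - d ∈ stdSq l then fillAt Ψ y h.choose i else y i

variable {l v₁ v₂ Ψ}

/-- Each anchor lies in the window of a cell of the other's square, so each is
lexicographically below the other. -/
lemma IsAnchor.eq_of_inBox {y : ℤ × ℤ → A} {d d' p q : ℤ × ℤ} (hd : IsAnchor l v₁ v₂ y d)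
    (hd' : IsAnchor l v₁ v₂ y d') (hp : p - d ∈ stdSq l) (hq : q - d' ∈ stdSq l)
    (hpq : InBox 1 (q - p)) : d = d' := by
  obtain ⟨-, hdef, hmax⟩ := hd p hp
  obtain ⟨-, hdef', hmax'⟩ := hd' q hq
  have hd'p : InBox (2 * l) (d' - p) := by
    simp only [InBox, stdSq, Set.mem_ofPred_eq, Prod.fst_sub, Prod.snd_sub] at *; omega
  have hdq : InBox (2 * l) (d - q) := by
    simp only [InBox, stdSq, Set.mem_ofPred_eq, Prod.fst_sub, Prod.snd_sub] at *; omega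
  exact toLex_inj.1 (le_antisymm (hmax' d hdq hdef) (hmax d' hd'p hdef'))

lemma IsAnchor.not_defectFree (hl : 0 < l) {y : ℤ × ℤ → A} {d : ℤ × ℤ}
    (hd : IsAnchor l v₁ v₂ y d) : ¬ DefectFree v₁ v₂ y d :=
  (hd d (by simp [stdSq, hl])).2.1

lemma repair_eq_fillAt {y : ℤ × ℤ → A} {d i : ℤ × ℤ} (hd : IsAnchor l v₁ v₂ y d)
    (hi : i - d ∈ stdSq l) : repair l v₁ v₂ Ψ y i = fillAt Ψ y d i := by
  have h : ∃ d, IsAnchor l v₁ v₂ y d ∧ i - d ∈ stdSq l := ⟨d, hd, hi⟩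
  rw [repair, dif_pos h, h.choose_spec.1.eq_of_inBox hd h.choose_spec.2 hi (by simp [InBox])]

lemma repair_eq_self {y : ℤ × ℤ → A} {i : ℤ × ℤ}
    (h : ¬ ∃ d, IsAnchor l v₁ v₂ y d ∧ i - d ∈ stdSq l) : repair l v₁ v₂ Ψ y i = y i := by
  rw [repair, dif_neg h]

lemma repair_eq_self_of_mem_tilingSpace (hl : 0 < l) {y : ℤ × ℤ → A}
    (hy : y ∈ tilingSpace v₁ v₂) : repair l v₁ v₂ Ψ y = y :=
  funext fun _ => repair_eq_self fun ⟨_, hd, _⟩ =>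
    hd.not_defectFree hl (mem_tilingSpace_iff.1 hy _)

lemma fillAt_eq_self (hfix : FixesOutside l Ψ) {y : ℤ × ℤ → A} {d i : ℤ × ℤ}
    (hi : i - d ∉ stdSq l) : fillAt Ψ y d i = y i := by
  rw [fillAt, hfix _ _ hi, add_sub_cancel]

lemma repair_eq_fillAt_of_inBox (hfix : FixesOutside l Ψ) {y : ℤ × ℤ → A} {d p q : ℤ × ℤ}
    (hd : IsAnchor l v₁ v₂ y d) (hp : p - d ∈ stdSq l) (hpq : InBox 1 (q - p)) :
    repair l v₁ v₂ Ψ y q = fillAt Ψ y d q := by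
  by_cases hq : q - d ∈ stdSq l
  · exact repair_eq_fillAt hd hq
  · rw [fillAt_eq_self hfix hq]
    refine repair_eq_self fun ⟨d', hd', hq'⟩ => hq ?_
    rwa [hd.eq_of_inBox hd' hp hq' hpq]

lemma defectFree_repair_of_mem_sq (hfix : FixesOutside l Ψ) (hfill : FillsSquare l v₁ v₂ Ψ)
    {y : ℤ × ℤ → A} {d p : ℤ × ℤ} (hd : IsAnchor l v₁ v₂ y d) (hp : p - d ∈ stdSq l) :
    DefectFree v₁ v₂ (repair l v₁ v₂ Ψ y) p := by
  rw [defectFree_congr fun q hq => repair_eq_fillAt_of_inBox hfix hd hp hq]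
  have hshift : fillAt Ψ y d = fun i => Ψ (fun q => y (d + q)) (-d + i) := by
    funext i; rw [fillAt, neg_add_eq_sub]
  rw [hshift, defectFree_translate, neg_add_eq_sub]
  exact hfill _ _ hp

lemma defectFree_repair (hfix : FixesOutside l Ψ) (hfill : FillsSquare l v₁ v₂ Ψ)
    {y : ℤ × ℤ → A} {c : ℤ × ℤ} (hc : DefectFree v₁ v₂ y c) :
    DefectFree v₁ v₂ (repair l v₁ v₂ Ψ y) c := by
  have covered : ∀ i, (∃ d, IsAnchor l v₁ v₂ y d ∧ i - d ∈ stdSq l) →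
      DefectFree v₁ v₂ (repair l v₁ v₂ Ψ y) i :=
    fun i ⟨d, hd, hi⟩ => defectFree_repair_of_mem_sq hfix hfill hd hi
  by_cases hcov : ∃ d, IsAnchor l v₁ v₂ y d ∧ c - d ∈ stdSq l
  · exact covered c hcov
  have hself := repair_eq_self (Ψ := Ψ) hcov
  refine ⟨?_, ?_, ?_, ?_⟩
  · by_cases h : ∃ d, IsAnchor l v₁ v₂ y d ∧ c - e1 - d ∈ stdSq l
    · simpa using (covered _ h).2.1
    · simpa [hself, repair_eq_self h] using hc.1
  · by_cases h : ∃ d, IsAnchor l v₁ v₂ y d ∧ c + e1 - d ∈ stdSq l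
    · simpa using (covered _ h).1
    · simpa [hself, repair_eq_self h] using hc.2.1
  · by_cases h : ∃ d, IsAnchor l v₁ v₂ y d ∧ c - e2 - d ∈ stdSq l
    · simpa using (covered _ h).2.2.2
    · simpa [hself, repair_eq_self h] using hc.2.2.1
  · by_cases h : ∃ d, IsAnchor l v₁ v₂ y d ∧ c + e2 - d ∈ stdSq l
    · simpa using (covered _ h).2.2.1
    · simpa [hself, repair_eq_self h] using hc.2.2.2

/-- The lexicographically largest defect of a finite defect set is an anchor. -/
lemma exists_anchor {y : ℤ × ℤ → A} (hfin : (defectSet v₁ v₂ y).Finite)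
    (hne : (defectSet v₁ v₂ y).Nonempty) :
    ∃ d ∈ defectSet v₁ v₂ y, IsAnchor l v₁ v₂ y d := by
  obtain ⟨m, hm, hmax⟩ := Set.exists_max_image _ toLex hfin hne
  refine ⟨m, hm, fun j hj => ⟨?_, hm, fun d' _ hd' => hmax d' hd'⟩⟩
  simp only [InBox, stdSq, Set.mem_ofPred_eq, Prod.fst_sub, Prod.snd_sub] at *; omega

lemma defectSet_repair_ssubset (hl : 0 < l) (hfix : FixesOutside l Ψ)
    (hfill : FillsSquare l v₁ v₂ Ψ) {y : ℤ × ℤ → A} (hfin : (defectSet v₁ v₂ y).Finite)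
    (hne : (defectSet v₁ v₂ y).Nonempty) :
    defectSet v₁ v₂ (repair l v₁ v₂ Ψ y) ⊂ defectSet v₁ v₂ y := by
  have hsub : defectSet v₁ v₂ (repair l v₁ v₂ Ψ y) ⊆ defectSet v₁ v₂ y :=
    fun c hc hcy => hc (defectFree_repair hfix hfill hcy)
  obtain ⟨d, hd, hanchor⟩ := exists_anchor (l := l) hfin hne
  exact (Set.ssubset_iff_of_subset hsub).2
    ⟨d, hd, not_not.2 (defectFree_repair_of_mem_sq hfix hfill hanchor (by simp [stdSq, hl]))⟩

lemma repair_iterate_mem_tilingSpace (hl : 0 < l) (hfix : FixesOutside l Ψ)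
    (hfill : FillsSquare l v₁ v₂ Ψ) (k : ℕ) {y : ℤ × ℤ → A}
    (hfin : (defectSet v₁ v₂ y).Finite) (hk : (defectSet v₁ v₂ y).ncard ≤ k) :
    (repair l v₁ v₂ Ψ)^[k] y ∈ tilingSpace v₁ v₂ := by
  induction k generalizing y with
  | zero =>
    rw [Function.iterate_zero_apply, ← defectSet_eq_empty_iff]
    exact (Set.ncard_eq_zero hfin).1 (Nat.le_zero.1 hk)
  | succ k ih =>
    rcases (defectSet v₁ v₂ y).eq_empty_or_nonempty with hempty | hne
    · have hy := defectSet_eq_empty_iff.1 hempty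
      rwa [Function.iterate_fixed (repair_eq_self_of_mem_tilingSpace hl hy)]
    · have hlt := defectSet_repair_ssubset hl hfix hfill hfin hne
      rw [Function.iterate_succ_apply]
      exact ih (hfin.subset hlt.subset) (by have := Set.ncard_lt_ncard hlt hfin; omega)

lemma isMaxDefectNear_translate (y : ℤ × ℤ → A) (v j d : ℤ × ℤ) :
    IsMaxDefectNear l v₁ v₂ (fun p => y (v + p)) j d ↔ IsMaxDefectNear l v₁ v₂ y (v + j) (v + d) := by
  unfold IsMaxDefectNear
  rw [add_sub_add_left_eq_sub, defectFree_translate]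
  refine and_congr_right' (and_congr_right' ((Equiv.addLeft v).forall_congr fun d' => ?_))
  simp only [Equiv.coe_addLeft, add_sub_add_left_eq_sub, defectFree_translate, toLex_add,
    add_le_add_iff_left]

lemma isAnchor_translate (y : ℤ × ℤ → A) (v d : ℤ × ℤ) :
    IsAnchor l v₁ v₂ (fun p => y (v + p)) d ↔ IsAnchor l v₁ v₂ y (v + d) := by
  refine (Equiv.addLeft v).forall_congr fun j => ?_
  simp only [Equiv.coe_addLeft, add_sub_add_left_eq_sub, isMaxDefectNear_translate]

lemma repair_translate (y : ℤ × ℤ → A) (v i : ℤ × ℤ) :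
    repair l v₁ v₂ Ψ (fun p => y (v + p)) i = repair l v₁ v₂ Ψ y (v + i) := by
  by_cases h : ∃ d, IsAnchor l v₁ v₂ y d ∧ v + i - d ∈ stdSq l
  · obtain ⟨d, hd, hi⟩ := h
    have hd' : IsAnchor l v₁ v₂ (fun p => y (v + p)) (-v + d) := by
      rwa [isAnchor_translate, add_neg_cancel_left]
    have hdiff : i - (-v + d) = v + i - d := by abel
    rw [repair_eq_fillAt hd hi, repair_eq_fillAt hd' (by rwa [hdiff]), fillAt, fillAt, hdiff]
    simp only [add_assoc, add_neg_cancel_left]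
  · have h' : ¬ ∃ d, IsAnchor l v₁ v₂ (fun p => y (v + p)) d ∧ i - d ∈ stdSq l :=
      fun ⟨d, hd, hi⟩ => h ⟨v + d, (isAnchor_translate y v d).1 hd,
        by rwa [add_sub_add_left_eq_sub]⟩
    rw [repair_eq_self h', repair_eq_self h]

lemma isAnchor_congr {y y' : ℤ × ℤ → A} {d i : ℤ × ℤ}
    (h : ∀ p, InBox (3 * l) (p - i) → y p = y' p) (hi : i - d ∈ stdSq l) :
    IsAnchor l v₁ v₂ y d ↔ IsAnchor l v₁ v₂ y' d := by
  have key : ∀ j, j - d ∈ stdSq l → ∀ d', InBox (2 * l) (d' - j) →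
      (DefectFree v₁ v₂ y d' ↔ DefectFree v₁ v₂ y' d') := fun j hj d' hd' =>
    defectFree_congr fun p hp => h p (by
      simp only [InBox, stdSq, Set.mem_ofPred_eq, Prod.fst_sub, Prod.snd_sub] at *; omega)
  refine forall₂_congr fun j hj => and_congr_right fun hdj => ?_
  exact and_congr (not_congr (key j hj d hdj))
    (forall₂_congr fun d' hd' => by rw [key j hj d' hd'])

lemma repair_congr (hread : ReadsBorder l Ψ) {y y' : ℤ × ℤ → A} {i : ℤ × ℤ}
    (h : ∀ p, InBox (3 * l) (p - i) → y p = y' p) :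
    repair l v₁ v₂ Ψ y i = repair l v₁ v₂ Ψ y' i := by
  by_cases hcov : ∃ d, IsAnchor l v₁ v₂ y d ∧ i - d ∈ stdSq l
  · obtain ⟨d, hd, hi⟩ := hcov
    rw [repair_eq_fillAt hd hi, repair_eq_fillAt ((isAnchor_congr h hi).1 hd) hi]
    refine hread _ _ (fun b hb => h _ ?_) _ hi
    have := mem_stdBorder_bounds hb
    simp only [InBox, stdSq, Set.mem_ofPred_eq, Prod.fst_sub, Prod.snd_sub, Prod.fst_add,
      Prod.snd_add] at *
    omega
  · have hcov' : ¬ ∃ d, IsAnchor l v₁ v₂ y' d ∧ i - d ∈ stdSq l := fun ⟨d, hd, hi⟩ =>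
      hcov ⟨d, (isAnchor_congr h hi).2 hd, hi⟩
    rw [repair_eq_self hcov, repair_eq_self hcov']
    exact h i (by simp [InBox])

lemma exists_localRule_repair (hread : ReadsBorder l Ψ) :
    ∃ f : ({n // n ∈ Finset.Icc (-(3 * l : ℤ), -(3 * l : ℤ)) (3 * l, 3 * l)} → A) → A,
      ∀ x i, repair l v₁ v₂ Ψ x i = f (fun n => x (i + n.val)) :=
  exists_localRule ⟨0, by simp [Prod.le_def]⟩ repair_translate fun _ _ h =>
    repair_congr hread fun p hp => h p (by
      simp only [InBox, sub_zero] at hp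
      simp only [Finset.mem_Icc, Prod.le_def]
      omega)

end Repair

end TilingRepair

open TilingRepair

theorem stmt6_general {A : Type} (l : ℕ) (hl : 2 ≤ l)
    (v₁ v₂ : A → A → Bool) (X : Set (ℤ × ℤ → A)) (hX : X = tilingSpace v₁ v₂)
    (hfill : StronglyFillable l v₁ v₂) :
    ∃ (F : (ℤ × ℤ → A) → (ℤ × ℤ → A)) (N : Finset (ℤ × ℤ))
      (f : ({n // n ∈ N} → A) → A) (c : ℕ),
      0 < c ∧
      (∀ x i, F x i = f (fun n => x (i + n.val))) ∧
      (∀ x ∈ X, F x = x) ∧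
      (∀ y ∈ FPert X, ∀ n : ℕ, pdist2 X y = n →
        ∃ t ≤ c * (n ^ 2 + 1), F^[t] y ∈ X) := by
  obtain ⟨Ψ, hread, hfix, hfills⟩ := hfill
  subst hX
  have hl0 : 0 < l := by omega
  obtain ⟨f, hf⟩ := exists_localRule_repair (v₁ := v₁) (v₂ := v₂) hread
  refine ⟨repair l v₁ v₂ Ψ, _, f, 9, by norm_num, hf,
    fun x hx => repair_eq_self_of_mem_tilingSpace hl0 hx, ?_⟩
  rintro y hy n rfl
  obtain ⟨x, hx, hfin, hdiam⟩ := exists_diam2_eq_pdist2 hy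
  obtain ⟨i, hi⟩ := exists_square_of_finite hfin
  rw [hdiam] at hi
  obtain ⟨hdfin, hcard⟩ := defectSet_finite_and_ncard_le hx hi
  exact ⟨_, by nlinarith, repair_iterate_mem_tilingSpace hl0 hfix hfills _ hdfin hcard⟩

/-- Self-stabilisation of strongly `ℓ`-fillable tiling spaces (`ℓ ≥ 2`): there
is a cellular automaton over the same alphabet that stabilises `X` from finite
perturbations in quadratic time. -/
theorem stmt6 {A : Type} [Fintype A] (l : ℕ) (hl : 2 ≤ l)
    (v₁ v₂ : A → A → Bool) (X : Set (ℤ × ℤ → A)) (hX : X = tilingSpace v₁ v₂)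
    (hne : X.Nonempty) (hfill : StronglyFillable l v₁ v₂) :
    ∃ (F : (ℤ × ℤ → A) → (ℤ × ℤ → A)) (N : Finset (ℤ × ℤ))
      (f : ({n // n ∈ N} → A) → A) (c : ℕ),
      0 < c ∧
      (∀ x i, F x i = f (fun n => x (i + n.val))) ∧
      (∀ x ∈ X, F x = x) ∧
      (∀ y ∈ FPert X, ∀ n : ℕ, pdist2 X y = n →
        ∃ t ≤ c * (n ^ 2 + 1), F^[t] y ∈ X) :=
  stmt6_general l hl v₁ v₂ X hX hfill
end
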